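/- arXiv:2006.01570 — 3 statements merged into one kernel-verified Lean document; each statement's English description precedes it below -/
import Mathlib

section
/- Let N be a finite set and, for each j ∈ N, let w_j ∈ ℝ, r_j ∈ ℝ, θ_j ∈ ℝ, φ_j ∈ ℝ, ψ_j ∈ ℝ and x_j ∈ ℂ. Let R : ℝ → ℝ, β ∈ ℝ, M ∈ ℤ, m ∈ ℤ, and φ ∈ ℝ. Then Σ_{j∈N} w_j · R(r_j) · exp(I·(m·(θ_j + φ) + β)) · exp(I·M·(φ_j + φ − ψ_j)) · (exp(I·M·ψ_j) · x_j) = exp(I·(M + m)·φ) · Σ_{j∈N} w_j · R(r_j) · exp(I·(m·θ_j + β)) · exp(I·M·φ_j) · x_j. (Lemma 1 in full: under simultaneous arbitrary rotations of coordinate systems at the center vertex and at every neighbor, the discrete HSN convolution output transforms exactly as a feature of rotation order M + m in the rotated coordinate system at the center.) -/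
open Complex Finset

/-! Rotating the frame at `i` by `-φ` shifts every angle `θ_j` and `φ_j` by `φ`, so each summand
picks up the phase `exp (I m φ) · exp (I M φ)`; rotating the frame at `j` by `-ψ_j` changes
`φ_j` and `x_j` by opposite phases `exp (∓ I M ψ_j)`, which cancel. -/

theorem exp_I_mul_filter_phase_rotate (m θ φ β : ℂ) :
    exp (I * (m * (θ + φ) + β)) = exp (I * m * φ) * exp (I * (m * θ + β)) := by
  rw [← exp_add]
  ring_nf

theorem exp_I_mul_transport_rotate_mul (M a φ ψ x : ℂ) :
    exp (I * M * (a + φ - ψ)) * (exp (I * M * ψ) * x) = exp (I * M * φ) * (exp (I * M * a) * x) := by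
  rw [← mul_assoc, ← exp_add, ← mul_assoc, ← exp_add]
  ring_nf

/-- Lemma 1 in full: under simultaneous arbitrary rotations of coordinate systems at
the center vertex and at every neighbor, the discrete HSN convolution output transforms
exactly as a feature of rotation order `M + m` in the rotated coordinate system at the
center. -/
theorem hsn_conv_full_rotation {ι : Type*} (N : Finset ι)
    (w r θ φv ψ : ι → ℝ) (x : ι → ℂ) (R : ℝ → ℝ) (β : ℝ) (M m : ℤ) (φ : ℝ) :
    ∑ j ∈ N, (w j : ℂ) * (R (r j) : ℂ) *
        Complex.exp (Complex.I * ((m : ℂ) * ((θ j : ℂ) + (φ : ℂ)) + (β : ℂ))) *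
        Complex.exp (Complex.I * (M : ℂ) * ((φv j : ℂ) + (φ : ℂ) - (ψ j : ℂ))) *
        (Complex.exp (Complex.I * (M : ℂ) * (ψ j : ℂ)) * x j)
      = Complex.exp (Complex.I * ((M : ℂ) + (m : ℂ)) * (φ : ℂ)) *
        ∑ j ∈ N, (w j : ℂ) * (R (r j) : ℂ) *
          Complex.exp (Complex.I * ((m : ℂ) * (θ j : ℂ) + (β : ℂ))) *
          Complex.exp (Complex.I * (M : ℂ) * (φv j : ℂ)) * x j := by
  have hphase : exp (I * ((M : ℂ) + m) * φ) = exp (I * M * φ) * exp (I * m * φ) := by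
    rw [← exp_add]
    ring_nf
  rw [mul_sum]
  refine sum_congr rfl fun j _ => ?_
  rw [mul_assoc _ (exp _), exp_I_mul_transport_rotate_mul, exp_I_mul_filter_phase_rotate, hphase]
  ring
end

section
/- Let R : ℝ → ℝ be measurable, β ∈ ℝ, m ∈ ℤ, ε > 0, φ ∈ ℝ, and let x : ℝ × ℝ → ℂ be measurable such that x(r, θ + 2π) = x(r, θ) for all r, θ (2π-periodicity in the angular variable) and such that (r, θ) ↦ R(r) · exp(I·(m·θ + β)) · x(r, θ) · r is integrable on [0, ε] × [0, 2π]. Then ∫_{0}^{ε} ∫_{0}^{2π} R(r) · exp(I·(m·θ + β)) · x(r, θ − φ) · r dθ dr = exp(I·m·φ) · ∫_{0}^{ε} ∫_{0}^{2π} R(r) · exp(I·(m·θ + β)) · x(r, θ) · r dθ dr. (Rotation-equivariance of the circular-harmonic cross-correlation: rotating the domain of the input by φ multiplies the output by exp(I·m·φ).) -/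
/-!
Both the filter and the input are `2π`-periodic in `θ`, and the harmonic factor satisfies
`exp (I (m θ + β)) = exp (I m φ) · exp (I (m (θ - φ) + β))`. Hence, for every radius, the
rotated angular integrand is `exp (I m φ)` times the unrotated one evaluated at `θ - φ`, and
translating a periodic function does not change its integral over a period.
-/

open Complex MeasureTheory

theorem Function.Periodic.intervalIntegral_comp_sub_eq {E : Type*} [NormedAddCommGroup E]
    [NormedSpace ℝ E] {f : ℝ → E} {T : ℝ} (hf : f.Periodic T) (φ : ℝ) :
    ∫ θ in (0 : ℝ)..T, f (θ - φ) = ∫ θ in (0 : ℝ)..T, f θ := by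
  rw [intervalIntegral.integral_comp_sub_right, zero_sub, sub_eq_neg_add T,
    hf.intervalIntegral_add_eq (-φ) 0, zero_add]

theorem Complex.periodic_exp_I_mul_int_mul_add (m : ℤ) (β : ℝ) :
    (fun θ : ℝ => exp (I * ((m : ℂ) * (θ : ℂ) + (β : ℂ)))).Periodic (2 * Real.pi) := by
  intro θ
  have harg : I * ((m : ℂ) * ((θ + 2 * Real.pi : ℝ) : ℂ) + (β : ℂ))
      = I * ((m : ℂ) * (θ : ℂ) + (β : ℂ)) + m * (2 * Real.pi * I) := by
    push_cast
    ring
  simp only [harg, exp_add, exp_int_mul_two_pi_mul_I, mul_one]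

theorem Complex.exp_I_mul_mul_add_eq_mul_sub (m : ℂ) (θ β φ : ℝ) :
    exp (I * (m * (θ : ℂ) + (β : ℂ)))
      = exp (I * m * (φ : ℂ)) * exp (I * (m * ((θ - φ : ℝ) : ℂ) + (β : ℂ))) := by
  rw [← exp_add]
  push_cast
  ring_nf

theorem circular_harmonic_correlation_rotation_equivariant_general
    (R : ℝ → ℝ) (β : ℝ) (m : ℤ) (ε : ℝ) (φ : ℝ)
    (x : ℝ × ℝ → ℂ)
    (hper : ∀ r θ : ℝ, x (r, θ + 2 * Real.pi) = x (r, θ)) :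
    (∫ r in (0 : ℝ)..ε, ∫ θ in (0 : ℝ)..(2 * Real.pi),
        (R r : ℂ) * Complex.exp (Complex.I * ((m : ℂ) * (θ : ℂ) + (β : ℂ))) *
          x (r, θ - φ) * (r : ℂ))
      = Complex.exp (Complex.I * (m : ℂ) * (φ : ℂ)) *
        ∫ r in (0 : ℝ)..ε, ∫ θ in (0 : ℝ)..(2 * Real.pi),
          (R r : ℂ) * Complex.exp (Complex.I * ((m : ℂ) * (θ : ℂ) + (β : ℂ))) *
            x (r, θ) * (r : ℂ) := by
  have inner : ∀ r : ℝ,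
      (∫ θ in (0 : ℝ)..(2 * Real.pi),
        (R r : ℂ) * exp (I * ((m : ℂ) * (θ : ℂ) + (β : ℂ))) * x (r, θ - φ) * (r : ℂ))
      = exp (I * (m : ℂ) * (φ : ℂ)) * ∫ θ in (0 : ℝ)..(2 * Real.pi),
          (R r : ℂ) * exp (I * ((m : ℂ) * (θ : ℂ) + (β : ℂ))) * x (r, θ) * (r : ℂ) := by
    intro r
    set F : ℝ → ℂ := fun θ =>
      (R r : ℂ) * exp (I * ((m : ℂ) * (θ : ℂ) + (β : ℂ))) * x (r, θ) * (r : ℂ)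
    have hF : F.Periodic (2 * Real.pi) := fun θ => by
      simp only [F, hper, periodic_exp_I_mul_int_mul_add m β θ]
    calc _ = ∫ θ in (0 : ℝ)..(2 * Real.pi), exp (I * (m : ℂ) * (φ : ℂ)) * F (θ - φ) :=
          intervalIntegral.integral_congr fun θ _ => by
            simp only [F, exp_I_mul_mul_add_eq_mul_sub (m : ℂ) θ β φ]
            ring
      _ = _ := by rw [intervalIntegral.integral_const_mul, hF.intervalIntegral_comp_sub_eq]
  simp only [inner, intervalIntegral.integral_const_mul]

/-- Rotation-equivariance of the circular-harmonic cross-correlation: rotating the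
domain of the input by `φ` multiplies the output by `exp (I * m * φ)`. -/
theorem circular_harmonic_correlation_rotation_equivariant
    (R : ℝ → ℝ) (hR : Measurable R) (β : ℝ) (m : ℤ) (ε : ℝ) (hε : 0 < ε) (φ : ℝ)
    (x : ℝ × ℝ → ℂ) (hx : Measurable x)
    (hper : ∀ r θ : ℝ, x (r, θ + 2 * Real.pi) = x (r, θ))
    (hint : IntegrableOn
      (fun p : ℝ × ℝ => (R p.1 : ℂ) *
        Complex.exp (Complex.I * ((m : ℂ) * (p.2 : ℂ) + (β : ℂ))) * x p * (p.1 : ℂ))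
      (Set.Icc 0 ε ×ˢ Set.Icc 0 (2 * Real.pi))) :
    (∫ r in (0 : ℝ)..ε, ∫ θ in (0 : ℝ)..(2 * Real.pi),
        (R r : ℂ) * Complex.exp (Complex.I * ((m : ℂ) * (θ : ℂ) + (β : ℂ))) *
          x (r, θ - φ) * (r : ℂ))
      = Complex.exp (Complex.I * (m : ℂ) * (φ : ℂ)) *
        ∫ r in (0 : ℝ)..ε, ∫ θ in (0 : ℝ)..(2 * Real.pi),
          (R r : ℂ) * Complex.exp (Complex.I * ((m : ℂ) * (θ : ℂ) + (β : ℂ))) *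
            x (r, θ) * (r : ℂ) :=
  circular_harmonic_correlation_rotation_equivariant_general R β m ε φ x hper
end

section
/- Let m ∈ ℤ and let K : ℂ → ℂ be a measurable function satisfying K(exp(I·α) · v) = exp(I·m·α) · K(v) for all α ∈ ℝ and v ∈ ℂ (circular-harmonic steerability of order m). Let x : ℂ → ℂ be measurable, let φ ∈ ℝ, and let p ∈ ℂ be such that v ↦ K(v) · x(p + v) is integrable on ℂ (identified with ℝ² with Lebesgue measure) and v ↦ K(v) · x(exp(−I·φ) · (exp(I·φ)·p + v)) is integrable. Then ∫_{ℂ} K(v) · x(exp(−I·φ) · (exp(I·φ)·p + v)) dv = exp(I·m·φ) · ∫_{ℂ} K(v) · x(p + v) dv; that is, writing (K ⋆ x)(q) = ∫_{ℂ} K(v) · x(q + v) dv, the cross-correlation satisfies (K ⋆ (x ∘ ρ_{−φ}))(ρ_φ(p)) = exp(I·m·φ) · (K ⋆ x)(p), where ρ_α(z) = exp(I·α)·z is rotation of the plane by α. -/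
open Complex MeasureTheory

/-! Substituting `v = exp (I φ) w`, which preserves Lebesgue measure, turns the correlation of
the rotated signal at the rotated point into the correlation of `x` at `p` with the rotated kernel
`w ↦ K (exp (I φ) w)`, and for a circular harmonic of order `m` that kernel is `exp (I m φ) • K`. -/

section

variable {E : Type*} [NormedAddCommGroup E] [NormedSpace ℂ E]

noncomputable def crossCorrelation (K : ℂ → ℂ) (x : ℂ → E) (q : ℂ) : E :=
  ∫ v, K v • x (q + v)

def IsCircularHarmonic (m : ℤ) (K : ℂ → ℂ) : Prop :=
  ∀ (α : ℝ) (v : ℂ), K (exp (I * α) * v) = exp (I * m * α) * K v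

theorem integral_comp_exp_mul_I_mul (f : ℂ → E) (α : ℝ) :
    ∫ v, f (exp (I * α) * v) = ∫ v, f v := by
  have hrot : ∀ v, rotation (Circle.exp α) v = exp (I * α) * v := fun v => by
    rw [rotation_apply, Circle.coe_exp, mul_comm (α : ℂ)]
  simpa only [hrot] using integral_comp (rotation (Circle.exp α)) f

theorem crossCorrelation_comp_rotation (K : ℂ → ℂ) (x : ℂ → E) (φ : ℝ) (p : ℂ) :
    crossCorrelation K (fun z => x (exp (-(I * φ)) * z)) (exp (I * φ) * p) =
      crossCorrelation (fun w => K (exp (I * φ) * w)) x p := by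
  have hinv : exp (-(I * φ)) * exp (I * φ) = 1 := by rw [← exp_add, neg_add_cancel, exp_zero]
  unfold crossCorrelation
  rw [← integral_comp_exp_mul_I_mul _ φ]
  simp only [← mul_add, ← mul_assoc, hinv, one_mul]

theorem IsCircularHarmonic.crossCorrelation_comp_exp_mul_I_mul {m : ℤ} {K : ℂ → ℂ}
    (hK : IsCircularHarmonic m K) (x : ℂ → E) (φ : ℝ) (p : ℂ) :
    crossCorrelation (fun w => K (exp (I * φ) * w)) x p =
      exp (I * m * φ) • crossCorrelation K x p := by
  simp only [crossCorrelation, hK φ, mul_smul, integral_smul]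

end

theorem circular_harmonic_kernel_correlation_rotation_equivariant_general
    (m : ℤ) (K : ℂ → ℂ)
    (hK : ∀ (α : ℝ) (v : ℂ),
      K (Complex.exp (Complex.I * (α : ℂ)) * v) =
        Complex.exp (Complex.I * (m : ℂ) * (α : ℂ)) * K v)
    (x : ℂ → ℂ) (φ : ℝ) (p : ℂ) :
    (∫ v : ℂ, K v * x (Complex.exp (-(Complex.I * (φ : ℂ))) *
        (Complex.exp (Complex.I * (φ : ℂ)) * p + v)))
      = Complex.exp (Complex.I * (m : ℂ) * (φ : ℂ)) * ∫ v : ℂ, K v * x (p + v) := by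
  have h := crossCorrelation_comp_rotation K x φ p
  rw [IsCircularHarmonic.crossCorrelation_comp_exp_mul_I_mul hK] at h
  simpa only [crossCorrelation, smul_eq_mul] using h

/-- Rotation-equivariance of cross-correlation with a circular-harmonic kernel of
order `m` on the plane `ℂ ≅ ℝ²` with Lebesgue measure:
`(K ⋆ (x ∘ ρ_{-φ})) (ρ_φ p) = exp (I m φ) * (K ⋆ x) p`. -/
theorem circular_harmonic_kernel_correlation_rotation_equivariant
    (m : ℤ) (K : ℂ → ℂ) (hKmeas : Measurable K)
    (hK : ∀ (α : ℝ) (v : ℂ),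
      K (Complex.exp (Complex.I * (α : ℂ)) * v) =
        Complex.exp (Complex.I * (m : ℂ) * (α : ℂ)) * K v)
    (x : ℂ → ℂ) (hx : Measurable x) (φ : ℝ) (p : ℂ)
    (h1 : Integrable (fun v : ℂ => K v * x (p + v)))
    (h2 : Integrable (fun v : ℂ =>
      K v * x (Complex.exp (-(Complex.I * (φ : ℂ))) *
        (Complex.exp (Complex.I * (φ : ℂ)) * p + v)))) :
    (∫ v : ℂ, K v * x (Complex.exp (-(Complex.I * (φ : ℂ))) *
        (Complex.exp (Complex.I * (φ : ℂ)) * p + v)))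
      = Complex.exp (Complex.I * (m : ℂ) * (φ : ℂ)) * ∫ v : ℂ, K v * x (p + v) :=
  circular_harmonic_kernel_correlation_rotation_equivariant_general m K hK x φ p
end
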